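/- Let (X_1,W_1),...,(X_n,W_n) be independent copies of a random vector (X,W) with joint probability density f_{X,W}, where X is a nonnegative continuous random variable. Let φ: [0,∞) → (0,1] be continuous decreasing with φ(0) = 1, and set W_i(t) = W_i·φ(t). Fix 1 ≤ r ≤ n. Then the operational reliability P_s(t) = P{X_{r:n} > t | min(W_{[r:n]}(t), ..., W_{[n:n]}(t)) > s} equals the ratio of integrals P_s(t) = [∫_t^∞ F_X(x)^{r-1} [P{X > x, W > s/φ(t)}]^{n-r} (∫_{s/φ(t)}^∞ f_{X,W}(x,y) dy) dx] / [∫_0^∞ F_X(x)^{r-1} [P{X > x, W > s}]^{n-r} (∫_s^∞ f_{X,W}(x,y) dy) dx], provided the denominator is positive. -/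

import Mathlib

/-!
Split the event according to the index `j` at which `X_{r:n} = X_j`; since `X` has no atoms these
`n` pieces are almost surely disjoint and have the same probability. Fixing `(X_j, W_j) = (x, y)`,
the piece asks that `x ∈ I`, `y > c`, and that among the other `n - 1` pairs exactly `r - 1` have
`X < x` while all the others have `X > x` and `W > c`; choosing which `r - 1` gives
`C(n-1, r-1) F(x)^{r-1} P{X > x, W > c}^{n-r}`. Integrating against the density yields
`n C(n-1, r-1)` times the integrals of the statement, and the constant cancels in the ratio.
Finally `W φ(t) > s` is `W > s / φ(t)`, and `X > 0` a.s. lets the denominator run over `(0, ∞)`.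
-/

open MeasureTheory ProbabilityTheory

open Classical in
/-- The `r`-th order statistic (r = 1, ..., n) of the values `v 0, ..., v (n-1)`:
the smallest `x` such that at least `r` of the values are `≤ x`. -/
noncomputable def orderStat {n : ℕ} (v : Fin n → ℝ) (r : ℕ) : ℝ :=
  sInf {x : ℝ | r ≤ (Finset.univ.filter (fun i => v i ≤ x)).card}

/-- `min(W_{[r:n]}, ..., W_{[n:n]})`: the minimum of the concomitants of the order
statistics of ranks `r, ..., n`. -/
noncomputable def concomMin {n : ℕ} (v w : Fin n → ℝ) (r : ℕ) : ℝ :=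
  sInf {y : ℝ | ∃ i, orderStat v r ≤ v i ∧ w i = y}

open Finset
open scoped ENNReal

section OrderStat

variable {n : ℕ} (v : Fin n → ℝ) {r : ℕ}

theorem exists_isLeast_orderStat_set (hr : 1 ≤ r) (hrn : r ≤ n) :
    ∃ i, IsLeast {x : ℝ | r ≤ #{j | v j ≤ x}} (v i) := by
  classical
  set U := {x : ℝ | r ≤ #{j | v j ≤ x}}
  -- lowering `x ∈ U` to the largest value `v i ≤ x` keeps the count, so `U` is least at a value
  have below : ∀ x ∈ U, ∃ i, v i ∈ U ∧ v i ≤ x := by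
    intro x hx
    obtain ⟨i, hi, hmax⟩ := exists_max_image {j | v j ≤ x} v
      (card_pos.mp (by simp only [U, Set.mem_ofPred_eq] at hx; omega))
    refine ⟨i, hx.trans (card_le_card fun j hj => ?_), (mem_filter.mp hi).2⟩
    exact mem_filter.mpr ⟨mem_univ j, hmax j hj⟩
  obtain ⟨i₀, -, hi₀⟩ := exists_max_image univ v (univ_nonempty_iff.mpr ⟨⟨0, by omega⟩⟩)
  have hU : v i₀ ∈ U := by
    simpa [U, filter_true_of_mem fun j _ => hi₀ j (mem_univ j)] using hrn
  obtain ⟨i, hi, hmin⟩ := exists_min_image {j | v j ∈ U} v ⟨i₀, by simpa using hU⟩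
  refine ⟨i, (mem_filter.mp hi).2, fun x hx => ?_⟩
  obtain ⟨k, hk, hkx⟩ := below x hx
  exact (hmin k (by simpa using hk)).trans hkx

theorem orderStat_isLeast (hr : 1 ≤ r) (hrn : r ≤ n) :
    IsLeast {x : ℝ | r ≤ #{j | v j ≤ x}} (orderStat v r) := by
  obtain ⟨i, hi⟩ := exists_isLeast_orderStat_set v hr hrn
  rwa [show orderStat v r = v i from hi.csInf_eq]

theorem exists_eq_orderStat (hr : 1 ≤ r) (hrn : r ≤ n) : ∃ i, v i = orderStat v r := by
  obtain ⟨i, hi⟩ := exists_isLeast_orderStat_set v hr hrn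
  exact ⟨i, hi.csInf_eq.symm⟩

theorem orderStat_le_iff (hr : 1 ≤ r) (hrn : r ≤ n) (x : ℝ) :
    orderStat v r ≤ x ↔ r ≤ #{j | v j ≤ x} := by
  refine ⟨fun h => (orderStat_isLeast v hr hrn).1.trans (card_le_card fun j hj => ?_),
    fun h => (orderStat_isLeast v hr hrn).2 h⟩
  exact mem_filter.mpr ⟨mem_univ j, (mem_filter.mp hj).2.trans h⟩

theorem orderStat_lt_iff (hr : 1 ≤ r) (hrn : r ≤ n) (y : ℝ) :
    orderStat v r < y ↔ r ≤ #{j | v j < y} := by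
  constructor
  · intro h
    refine (orderStat_isLeast v hr hrn).1.trans (card_le_card fun j hj => ?_)
    exact mem_filter.mpr ⟨mem_univ j, (mem_filter.mp hj).2.trans_lt h⟩
  · intro h
    obtain ⟨k, hk, hmax⟩ := exists_max_image {j | v j < y} v (card_pos.mp (by omega))
    refine ((orderStat_le_iff v hr hrn (v k)).mpr (h.trans (card_le_card ?_))).trans_lt
      (mem_filter.mp hk).2
    exact fun j hj => mem_filter.mpr ⟨mem_univ j, hmax j hj⟩

theorem orderStat_eq_iff (hr : 1 ≤ r) (hrn : r ≤ n) (y : ℝ) :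
    orderStat v r = y ↔ #{j | v j < y} < r ∧ r ≤ #{j | v j ≤ y} := by
  rw [le_antisymm_iff, orderStat_le_iff v hr hrn, ← not_lt (a := orderStat v r),
    orderStat_lt_iff v hr hrn, not_le, and_comm]

theorem lt_concomMin_iff (w : Fin n → ℝ) (hr : 1 ≤ r) (hrn : r ≤ n) (c : ℝ) :
    c < concomMin v w r ↔ ∀ i, orderStat v r ≤ v i → c < w i := by
  obtain ⟨i₀, hi₀⟩ := exists_eq_orderStat v hr hrn
  have hset : {y | ∃ i, orderStat v r ≤ v i ∧ w i = y} = w '' {i | orderStat v r ≤ v i} := by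
    ext y; simp
  rw [concomMin, hset, (Set.toFinite _).lt_csInf_iff (Set.Nonempty.image w ⟨i₀, hi₀.ge⟩),
    Set.forall_mem_image]
  rfl

end OrderStat

theorem measurable_card_filter {α ι : Type*} [MeasurableSpace α] [Fintype ι]
    {p : ι → α → Prop} [∀ i a, Decidable (p i a)] (hp : ∀ i, MeasurableSet {a | p i a}) :
    Measurable fun a => #{i | p i a} := by
  simp_rw [card_filter]
  exact Finset.measurable_sum _ fun i _ => Measurable.ite (hp i) measurable_const measurable_const

section Binomial

variable {ι α : Type*} [Fintype ι] {L R : Set α} [DecidablePred (· ∈ L)]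

theorem filter_mem_eq_of_mem_pi_ite [DecidableEq ι] (hLR : Disjoint L R) {S : Finset ι}
    {u : ι → α} (hu : u ∈ Set.univ.pi fun k => if k ∈ S then L else R) :
    ({k | u k ∈ L} : Finset ι) = S := by
  ext k
  have := hu k (Set.mem_univ k)
  by_cases hk : k ∈ S <;> simp only [hk, if_true, if_false] at this <;>
    simp [hk, this, Set.disjoint_right.mp hLR]

theorem setOf_card_filter_mem_eq_biUnion [DecidableEq ι] (hLR : Disjoint L R) (l : ℕ) :
    {u : ι → α | (∀ k, u k ∈ L ∪ R) ∧ #{k | u k ∈ L} = l}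
      = ⋃ S ∈ powersetCard l univ, Set.univ.pi fun k => if k ∈ S then L else R := by
  ext u
  simp only [Set.mem_ofPred_eq, Set.mem_iUnion, mem_powersetCard, subset_univ, true_and,
    exists_prop]
  constructor
  · rintro ⟨hmem, rfl⟩
    refine ⟨_, rfl, fun k _ => ?_⟩
    by_cases hk : u k ∈ L
    · simp [hk]
    · simpa [hk] using hmem k
  · rintro ⟨S, rfl, hu⟩
    refine ⟨fun k => ?_, by rw [filter_mem_eq_of_mem_pi_ite hLR hu]⟩
    have := hu k (Set.mem_univ k)
    by_cases hk : k ∈ S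
    · exact Or.inl (by simpa [hk] using this)
    · exact Or.inr (by simpa [hk] using this)

theorem MeasureTheory.Measure.pi_card_filter_mem_eq [MeasurableSpace α] (ν : Measure α)
    [SigmaFinite ν]
    (hL : MeasurableSet L) (hR : MeasurableSet R) (hLR : Disjoint L R) (l : ℕ) :
    Measure.pi (fun _ : ι => ν) {u | (∀ k, u k ∈ L ∪ R) ∧ #{k | u k ∈ L} = l}
      = (Fintype.card ι).choose l * ν L ^ l * ν R ^ (Fintype.card ι - l) := by
  classical
  have hpiece : ∀ S ∈ powersetCard l univ,
      Measure.pi (fun _ : ι => ν) (Set.univ.pi fun k => if k ∈ S then L else R)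
        = ν L ^ l * ν R ^ (Fintype.card ι - l) := by
    intro S hS
    rw [mem_powersetCard] at hS
    simp only [Measure.pi_pi, apply_ite ν, prod_ite, prod_const, filter_mem_eq_inter,
      univ_inter, hS.2]
    rw [filter_not, card_sdiff, filter_mem_eq_inter]
    simp [hS.2]
  rw [setOf_card_filter_mem_eq_biUnion hLR, measure_biUnion_finset, Finset.sum_congr rfl hpiece,
    sum_const, card_powersetCard, card_univ, nsmul_eq_mul, mul_assoc]
  · exact fun S _ S' _ hne => Set.disjoint_left.mpr fun u hu hu' =>
      hne ((filter_mem_eq_of_mem_pi_ite hLR hu).symm.trans (filter_mem_eq_of_mem_pi_ite hLR hu'))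
  · exact fun S _ => MeasurableSet.univ_pi fun k => by split_ifs <;> assumption

end Binomial

section Events

variable {n r : ℕ} {I : Set ℝ}

/-- With `v i = (X_i, W_i)`: the event `{X_{r:n} ∈ I, W_{[r:n]} > c, ..., W_{[n:n]} > c}`. -/
def concomEvent (n r : ℕ) (I : Set ℝ) (c : ℝ) : Set (Fin n → ℝ × ℝ) :=
  {v | orderStat (fun i => (v i).1) r ∈ I ∧
    ∀ i, orderStat (fun i => (v i).1) r ≤ (v i).1 → c < (v i).2}

def rankEvent (r : ℕ) (I : Set ℝ) (c : ℝ) (j : Fin n) : Set (Fin n → ℝ × ℝ) :=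
  {v | (v j).1 ∈ I ∧ #{i | (v i).1 < (v j).1} < r ∧ r ≤ #{i | (v i).1 ≤ (v j).1} ∧
    ∀ i, (v j).1 ≤ (v i).1 → c < (v i).2}

theorem mem_rankEvent_iff {c : ℝ} (hr : 1 ≤ r) (hrn : r ≤ n) (v : Fin n → ℝ × ℝ) (j : Fin n) :
    v ∈ rankEvent r I c j ↔
      v ∈ concomEvent n r I c ∧ orderStat (fun i => (v i).1) r = (v j).1 := by
  constructor
  · rintro ⟨hI, hlt, hle, hc⟩
    have h := (orderStat_eq_iff _ hr hrn _).mpr ⟨hlt, hle⟩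
    exact ⟨⟨h ▸ hI, h ▸ hc⟩, h⟩
  · rintro ⟨⟨hI, hc⟩, h⟩
    obtain ⟨hlt, hle⟩ := (orderStat_eq_iff _ hr hrn _).mp h
    rw [h] at hI hc
    exact ⟨hI, hlt, hle, hc⟩

theorem concomEvent_eq_iUnion_rankEvent (hr : 1 ≤ r) (hrn : r ≤ n) (I : Set ℝ) (c : ℝ) :
    concomEvent n r I c = ⋃ j, rankEvent r I c j := by
  ext v
  simp only [Set.mem_iUnion, mem_rankEvent_iff hr hrn]
  exact ⟨fun h => (exists_eq_orderStat _ hr hrn).imp fun j hj => ⟨h, hj.symm⟩,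
    fun ⟨_, h, _⟩ => h⟩

theorem measurableSet_rankEvent (hI : MeasurableSet I) (c : ℝ) (j : Fin n) :
    MeasurableSet (rankEvent r I c j) := by
  have hfst : ∀ i, Measurable fun v : Fin n → ℝ × ℝ => (v i).1 :=
    fun i => measurable_fst.comp (measurable_pi_apply i)
  have hsnd : ∀ i, Measurable fun v : Fin n → ℝ × ℝ => (v i).2 :=
    fun i => measurable_snd.comp (measurable_pi_apply i)
  have hc : MeasurableSet {v : Fin n → ℝ × ℝ | ∀ i, (v j).1 ≤ (v i).1 → c < (v i).2} := by
    rw [← Set.iInter_ofPred]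
    exact .iInter fun i => (measurableSet_le (hfst j) (hfst i)).imp
      (measurableSet_lt measurable_const (hsnd i))
  refine (hI.preimage (hfst j)).inter (.inter ?_ (.inter ?_ hc))
  · exact measurable_card_filter (fun i => measurableSet_lt (hfst i) (hfst j)) measurableSet_Iio
  · exact measurable_card_filter (fun i => measurableSet_le (hfst i) (hfst j)) measurableSet_Ici

theorem measurableSet_concomEvent (hr : 1 ≤ r) (hrn : r ≤ n) (hI : MeasurableSet I) (c : ℝ) :
    MeasurableSet (concomEvent n r I c) := by
  rw [concomEvent_eq_iUnion_rankEvent hr hrn]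
  exact .iUnion fun j => measurableSet_rankEvent hI c j

def rankSlice {ι : Type*} [Fintype ι] (r : ℕ) (c x : ℝ) : Set (ι → ℝ × ℝ) :=
  {u | #{k | (u k).1 < x} < r ∧ r ≤ #{k | (u k).1 ≤ x} + 1 ∧ ∀ k, x ≤ (u k).1 → c < (u k).2}

theorem insertNth_mem_rankEvent_iff {m : ℕ} {c : ℝ} (j : Fin (m + 1)) (p : ℝ × ℝ)
    (u : Fin m → ℝ × ℝ) :
    j.insertNth p u ∈ rankEvent r I c j ↔ p ∈ I ×ˢ Set.Ioi c ∧ u ∈ rankSlice r c p.1 := by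
  simp only [rankEvent, rankSlice, Set.mem_ofPred_eq, card_filter, Fin.sum_univ_succAbove _ j,
    Fin.insertNth_apply_same, Fin.forall_iff_succAbove j, Fin.insertNth_apply_succAbove,
    lt_irrefl, le_refl, if_false, if_true, zero_add, forall_const, Set.mem_prod, Set.mem_Ioi]
  rw [add_comm 1]
  tauto

theorem pi_rankSlice {ι : Type*} [Fintype ι] (ν : Measure (ℝ × ℝ)) [SigmaFinite ν] {x : ℝ}
    (hx : ν {q | q.1 = x} = 0) (hr : 1 ≤ r) (c : ℝ) :
    Measure.pi (fun _ : ι => ν) (rankSlice r c x)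
      = (Fintype.card ι).choose (r - 1) * ν {q | q.1 < x} ^ (r - 1) *
        ν {q | x < q.1 ∧ c < q.2} ^ (Fintype.card ι - (r - 1)) := by
  classical
  have hdisj : Disjoint {q : ℝ × ℝ | q.1 < x} {q | x < q.1 ∧ c < q.2} :=
    Set.disjoint_left.mpr fun q h h' => lt_asymm h h'.1
  have hR : MeasurableSet {q : ℝ × ℝ | x < q.1 ∧ c < q.2} :=
    (measurableSet_lt measurable_const measurable_fst).inter
      (measurableSet_lt measurable_const measurable_snd)
  rw [← Measure.pi_card_filter_mem_eq ν (measurableSet_lt measurable_fst measurable_const) hR hdisj]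
  -- off the null set where some `(u k).1 = x`, non-strict and strict comparisons with `x` agree
  refine measure_congr (Filter.eventuallyEq_set.mpr ?_)
  have hnull : ∀ k, Measure.pi (fun _ : ι => ν) (Function.eval k ⁻¹' {q | q.1 = x}) = 0 :=
    fun k => Measure.pi_eval_preimage_null _ hx
  have hae : ∀ᵐ u ∂Measure.pi (fun _ : ι => ν), ∀ k, (u k).1 ≠ x :=
    ae_all_iff.mpr fun k => measure_eq_zero_iff_ae_notMem.mp (hnull k)
  filter_upwards [hae] with u hu
  have hcard : #{k | (u k).1 ≤ x} = #{k | (u k).1 < x} :=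
    congrArg card (filter_congr fun k _ => (hu k).le_iff_lt)
  have hsplit : ∀ k, (x ≤ (u k).1 → c < (u k).2) ↔
      u k ∈ {q | q.1 < x} ∪ {q | x < q.1 ∧ c < q.2} := by
    intro k
    rcases (hu k).lt_or_gt with h | h <;> simp [h, h.le, not_le.mpr h]
  simp only [rankSlice, Set.mem_ofPred_eq, hcard, hsplit, Set.mem_ofPred_eq]
  have hrank : #{k | (u k).1 < x} < r ∧ r ≤ #{k | (u k).1 < x} + 1 ↔
      #{k | (u k).1 < x} = r - 1 := by omega
  rw [← and_assoc, hrank, and_comm]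

theorem pi_fst_eq_fst_null {m : ℕ} (ν : Measure (ℝ × ℝ)) [SigmaFinite ν]
    (hν : ∀ x, ν {q | q.1 = x} = 0) {j j' : Fin (m + 1)} (hjj : j ≠ j') :
    Measure.pi (fun _ => ν) {v : Fin (m + 1) → ℝ × ℝ | (v j).1 = (v j').1} = 0 := by
  obtain ⟨k, rfl⟩ := Fin.exists_succAbove_eq hjj.symm
  have hmeas : MeasurableSet {pu : (ℝ × ℝ) × (Fin m → ℝ × ℝ) | (pu.2 k).1 = pu.1.1} :=
    measurableSet_eq_fun (measurable_fst.comp ((measurable_pi_apply k).comp measurable_snd))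
      (measurable_fst.comp measurable_fst)
  have hpre : (MeasurableEquiv.piFinSuccAbove (fun _ => ℝ × ℝ) j).symm ⁻¹'
      {v | (v j).1 = (v (j.succAbove k)).1} = {pu | (pu.2 k).1 = pu.1.1} := by
    ext ⟨p, u⟩
    simp [MeasurableEquiv.piFinSuccAbove_symm_apply, eq_comm]
  rw [← ((measurePreserving_piFinSuccAbove (fun _ => ν) j).symm _).measure_preimage_equiv, hpre,
    Measure.measure_prod_null hmeas]
  refine Filter.Eventually.of_forall fun p => ?_
  exact Measure.pi_eval_preimage_null (fun _ : Fin m => ν) (i := k) (hν p.1)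

theorem pi_rankEvent {m : ℕ} (ν : Measure (ℝ × ℝ)) [SigmaFinite ν]
    (hν : ∀ x, ν {q | q.1 = x} = 0) (hr : 1 ≤ r) (hI : MeasurableSet I) (c : ℝ)
    (j : Fin (m + 1)) :
    Measure.pi (fun _ => ν) (rankEvent r I c j)
      = m.choose (r - 1) * ∫⁻ p in I ×ˢ Set.Ioi c,
          ν {q | q.1 < p.1} ^ (r - 1) * ν {q | p.1 < q.1 ∧ c < q.2} ^ (m + 1 - r) ∂ν := by
  set e := MeasurableEquiv.piFinSuccAbove (fun _ : Fin (m + 1) => ℝ × ℝ) j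
  have hIc : MeasurableSet (I ×ˢ Set.Ioi c) := hI.prod measurableSet_Ioi
  have hfibre : ∀ p : ℝ × ℝ,
      Measure.pi (fun _ : Fin m => ν) (Prod.mk p ⁻¹' (e.symm ⁻¹' rankEvent r I c j))
        = (I ×ˢ Set.Ioi c).indicator
            (fun p => Measure.pi (fun _ : Fin m => ν) (rankSlice r c p.1)) p := by
    intro p
    have hpre : Prod.mk p ⁻¹' (e.symm ⁻¹' rankEvent r I c j)
        = {u | p ∈ I ×ˢ Set.Ioi c ∧ u ∈ rankSlice r c p.1} := by
      ext u
      exact insertNth_mem_rankEvent_iff j p u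
    by_cases hp : p ∈ I ×ˢ Set.Ioi c <;> simp [hpre, hp]
  calc Measure.pi (fun _ => ν) (rankEvent r I c j)
      = ∫⁻ p, Measure.pi (fun _ : Fin m => ν)
          (Prod.mk p ⁻¹' (e.symm ⁻¹' rankEvent r I c j)) ∂ν := by
        rw [← ((measurePreserving_piFinSuccAbove (fun _ => ν) j).symm e).measure_preimage_equiv,
          Measure.prod_apply ((measurableSet_rankEvent hI c j).preimage e.symm.measurable)]
    _ = ∫⁻ p in I ×ˢ Set.Ioi c, Measure.pi (fun _ : Fin m => ν) (rankSlice r c p.1) ∂ν := by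
        rw [lintegral_congr hfibre, lintegral_indicator hIc]
    _ = ∫⁻ p in I ×ˢ Set.Ioi c, m.choose (r - 1) *
          (ν {q | q.1 < p.1} ^ (r - 1) * ν {q | p.1 < q.1 ∧ c < q.2} ^ (m + 1 - r)) ∂ν := by
        refine lintegral_congr fun p => ?_
        rw [pi_rankSlice _ (hν p.1) hr, Fintype.card_fin, mul_assoc,
          show m - (r - 1) = m + 1 - r by omega]
    _ = _ := lintegral_const_mul' _ _ (ENNReal.natCast_ne_top _)

theorem pi_concomEvent {m : ℕ} (ν : Measure (ℝ × ℝ)) [SigmaFinite ν]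
    (hν : ∀ x, ν {q | q.1 = x} = 0) (hr : 1 ≤ r) (hrm : r ≤ m + 1) (hI : MeasurableSet I)
    (c : ℝ) :
    Measure.pi (fun _ => ν) (concomEvent (m + 1) r I c)
      = ((m + 1) * m.choose (r - 1) : ℕ) * ∫⁻ p in I ×ˢ Set.Ioi c,
          ν {q | q.1 < p.1} ^ (r - 1) * ν {q | p.1 < q.1 ∧ c < q.2} ^ (m + 1 - r) ∂ν := by
  have hdisj : Pairwise (Function.onFun (AEDisjoint (Measure.pi fun _ => ν))
      fun j : Fin (m + 1) => rankEvent r I c j) := by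
    intro j j' hjj
    refine measure_mono_null (fun v ⟨hv, hv'⟩ => ?_) (pi_fst_eq_fst_null ν hν hjj)
    exact ((mem_rankEvent_iff hr hrm v j).mp hv).2.symm.trans
      ((mem_rankEvent_iff hr hrm v j').mp hv').2
  rw [concomEvent_eq_iUnion_rankEvent hr hrm, measure_iUnion₀ hdisj
    fun j => (measurableSet_rankEvent hI c j).nullMeasurableSet, tsum_fintype,
    sum_congr rfl fun j _ => pi_rankEvent ν hν hr hI c j, sum_const, card_univ, Fintype.card_fin,
    nsmul_eq_mul, ← mul_assoc]
  push_cast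
  rfl

end Events

section Density

variable (f : ℝ → ℝ → ℝ) {g : ℝ → ℝ≥0∞}

theorem setLIntegral_prod_Ioi_withDensity (hf : Measurable (Function.uncurry f))
    {I : Set ℝ} (hI : MeasurableSet I) (c : ℝ) (hg : Measurable g) :
    ∫⁻ p in I ×ˢ Set.Ioi c, g p.1
        ∂(volume : Measure (ℝ × ℝ)).withDensity (fun p => ENNReal.ofReal (f p.1 p.2))
      = ∫⁻ x in I, g x * ∫⁻ y in Set.Ioi c, ENNReal.ofReal (f x y) := by
  have hρ : Measurable fun p : ℝ × ℝ => ENNReal.ofReal (f p.1 p.2) := hf.ennreal_ofReal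
  have hg₁ : Measurable fun p : ℝ × ℝ => g p.1 := hg.comp measurable_fst
  rw [setLIntegral_withDensity_eq_setLIntegral_mul _ hρ hg₁ (hI.prod measurableSet_Ioi),
    Measure.volume_eq_prod, setLIntegral_prod _ (hρ.mul hg₁).aemeasurable]
  refine lintegral_congr fun x => ?_
  simp only [Pi.mul_apply]
  rw [← lintegral_const_mul _ hf.of_uncurry_left.ennreal_ofReal]
  simp_rw [mul_comm]

theorem toReal_setLIntegral_mul_eq_integral (hf_nonneg : ∀ x y, 0 ≤ f x y)
    (hf : Measurable (Function.uncurry f)) (hf_fin : ∫⁻ p : ℝ × ℝ, ENNReal.ofReal (f p.1 p.2) ≠ ∞)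
    (hg : Measurable g) (hg_top : ∀ x, g x ≠ ∞) (I : Set ℝ) (c : ℝ) :
    (∫⁻ x in I, g x * ∫⁻ y in Set.Ioi c, ENNReal.ofReal (f x y)).toReal
      = ∫ x in I, (g x).toReal * ∫ y in Set.Ioi c, f x y := by
  have hρ : Measurable fun p : ℝ × ℝ => ENNReal.ofReal (f p.1 p.2) := hf.ennreal_ofReal
  have hsection_fin : ∀ᵐ x, ∫⁻ y, ENNReal.ofReal (f x y) < ∞ := by
    refine ae_lt_top hρ.lintegral_prod_right' ?_
    rwa [← lintegral_prod _ hρ.aemeasurable, ← Measure.volume_eq_prod]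
  rw [← integral_toReal]
  · refine integral_congr_ae (Filter.Eventually.of_forall fun x => ?_)
    simp only [ENNReal.toReal_mul]
    rw [integral_eq_lintegral_of_nonneg_ae (Filter.Eventually.of_forall (hf_nonneg x))
      hf.of_uncurry_left.aestronglyMeasurable]
  · exact (hg.mul hρ.lintegral_prod_right').aemeasurable
  · refine ae_restrict_of_ae (hsection_fin.mono fun x hx => ?_)
    exact ENNReal.mul_lt_top (hg_top x).lt_top ((setLIntegral_le_lintegral _ _).trans_lt hx)

end Density

theorem ProbabilityTheory.iIndepFun.measure_preimage_eq_pi {Ω ι β : Type*} [Fintype ι]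
    [MeasurableSpace Ω] [MeasurableSpace β] {μ : Measure Ω} [IsProbabilityMeasure μ]
    {Z : ι → Ω → β} (hindep : iIndepFun Z μ) (hZ : ∀ i, Measurable (Z i)) {ν : Measure β}
    (hlaw : ∀ i, μ.map (Z i) = ν) {E : Set (ι → β)} (hE : MeasurableSet E) :
    μ {ω | (fun i => Z i ω) ∈ E} = Measure.pi (fun _ => ν) E := by
  have hpi : Measure.pi (fun _ : ι => ν) = Measure.pi fun i => μ.map (Z i) := by simp_rw [hlaw]
  rw [hpi, ← (iIndepFun_iff_map_fun_eq_pi_map fun i => (hZ i).aemeasurable).mp hindep,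
    Measure.map_apply (measurable_pi_lambda _ hZ) hE]
  rfl

theorem withDensity_fst_eq_null (ρ : ℝ × ℝ → ℝ≥0∞) (x : ℝ) :
    (volume : Measure (ℝ × ℝ)).withDensity ρ {q | q.1 = x} = 0 := by
  refine withDensity_absolutelyContinuous _ _ ?_
  rw [show {q : ℝ × ℝ | q.1 = x} = {x} ×ˢ Set.univ by ext; simp, Measure.volume_eq_prod,
    Measure.prod_prod, Real.volume_singleton, zero_mul]

theorem toReal_pi_concomEvent {m r : ℕ} (hr : 1 ≤ r) (hrm : r ≤ m + 1) (f : ℝ → ℝ → ℝ)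
    (hf_nonneg : ∀ x y, 0 ≤ f x y) (hf : Measurable (Function.uncurry f))
    {ν : Measure (ℝ × ℝ)} [IsFiniteMeasure ν]
    (hν : ν = (volume : Measure (ℝ × ℝ)).withDensity fun p => ENNReal.ofReal (f p.1 p.2))
    {I : Set ℝ} (hI : MeasurableSet I) (c : ℝ) :
    (Measure.pi (fun _ => ν) (concomEvent (m + 1) r I c)).toReal
      = ((m + 1) * m.choose (r - 1) : ℕ) * ∫ x in I, (ν {q | q.1 < x}).toReal ^ (r - 1) *
          (ν {q | x < q.1 ∧ c < q.2}).toReal ^ (m + 1 - r) * ∫ y in Set.Ioi c, f x y := by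
  have hmono : Monotone fun x : ℝ => ν {q | q.1 < x} :=
    fun x y hxy => measure_mono fun q (hq : q.1 < x) => hq.trans_le hxy
  have hanti : Antitone fun x : ℝ => ν {q | x < q.1 ∧ c < q.2} :=
    fun x y hxy => measure_mono fun q (hq : y < q.1 ∧ c < q.2) => ⟨hxy.trans_lt hq.1, hq.2⟩
  have hf_fin : ∫⁻ p : ℝ × ℝ, ENNReal.ofReal (f p.1 p.2) ≠ ∞ := by
    rw [← setLIntegral_univ, ← withDensity_apply _ MeasurableSet.univ, ← hν]
    exact measure_ne_top ν _
  have hg : Measurable fun x =>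
      ν {q | q.1 < x} ^ (r - 1) * ν {q | x < q.1 ∧ c < q.2} ^ (m + 1 - r) :=
    (hmono.measurable.pow_const _).mul (hanti.measurable.pow_const _)
  rw [pi_concomEvent ν (hν ▸ withDensity_fst_eq_null _) hr hrm hI c, ENNReal.toReal_mul,
    ENNReal.toReal_natCast]
  subst hν
  rw [setLIntegral_prod_Ioi_withDensity f hf hI c hg,
    toReal_setLIntegral_mul_eq_integral f hf_nonneg hf hf_fin hg (fun x => by finiteness)]
  simp only [ENNReal.toReal_mul, ENNReal.toReal_pow]

theorem pi_concomEvent_univ {m r : ℕ} (hr : 1 ≤ r) (hrm : r ≤ m + 1) (ν : Measure (ℝ × ℝ))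
    [SigmaFinite ν] (hν : ∀ x, ν {q | q.1 = x} = 0) (hnonneg : ∀ᵐ q ∂ν, 0 ≤ q.1) (c : ℝ) :
    Measure.pi (fun _ => ν) (concomEvent (m + 1) r Set.univ c)
      = Measure.pi (fun _ => ν) (concomEvent (m + 1) r (Set.Ioi 0) c) := by
  have hpos : ∀ᵐ q ∂ν, 0 < q.1 := by
    filter_upwards [hnonneg, measure_eq_zero_iff_ae_notMem.mp (hν 0)] with q h0 h1
    exact h0.lt_of_ne' h1
  have hsupp : Set.univ ×ˢ Set.Ioi c =ᵐ[ν] Set.Ioi 0 ×ˢ Set.Ioi c :=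
    Filter.eventuallyEq_set.mpr (hpos.mono fun q hq => by simp [hq])
  rw [pi_concomEvent ν hν hr hrm MeasurableSet.univ, pi_concomEvent ν hν hr hrm measurableSet_Ioi,
    setLIntegral_congr hsupp]

/-- the operational reliability
  P_s(t) = P{X_{r:n} > t | min(W_{[r:n]}(t), ..., W_{[n:n]}(t)) > s} = Q(t,s)/D(s),
where Q(t,s) = P{X_{r:n} > t, W_{[r:n]}(t) > s, ..., W_{[n:n]}(t) > s} (with
W_{[i:n]}(t) = W_{[i:n]}·φ(t)) and D(s) = P{min(W_{[r:n]}, ..., W_{[n:n]}) > s},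
equals the ratio of integrals
  [∫_t^∞ F_X(x)^{r-1}·[P{X>x, W>s/φ(t)}]^{n-r}·(∫_{s/φ(t)}^∞ f(x,y) dy) dx] /
  [∫_0^∞ F_X(x)^{r-1}·[P{X>x, W>s}]^{n-r}·(∫_s^∞ f(x,y) dy) dx],
provided the denominator is positive (the common factor n·C(n-1,r-1) cancels). -/
theorem statement10
    {Ω : Type*} [MeasurableSpace Ω] (μ : Measure Ω) [IsProbabilityMeasure μ]
    (n r : ℕ) (hr : 1 ≤ r) (hrn : r ≤ n)
    (X W : Fin n → Ω → ℝ)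
    (hXmeas : ∀ i, Measurable (X i)) (hWmeas : ∀ i, Measurable (W i))
    (f : ℝ → ℝ → ℝ) (hf_nonneg : ∀ x y, 0 ≤ f x y)
    (hf_meas : Measurable (Function.uncurry f))
    (hindep : iIndepFun (fun i ω => (X i ω, W i ω)) μ)
    (hlaw : ∀ i, Measure.map (fun ω => (X i ω, W i ω)) μ =
      (volume : Measure (ℝ × ℝ)).withDensity (fun p => ENNReal.ofReal (f p.1 p.2)))
    (hX_nonneg : ∀ i, ∀ᵐ ω ∂μ, 0 ≤ X i ω)
    (φ : ℝ → ℝ)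
    (hφ_mem : ∀ u ∈ Set.Ici (0 : ℝ), φ u ∈ Set.Ioc (0 : ℝ) 1)
    (t s : ℝ) (ht : 0 ≤ t) :
    (μ {ω | t < orderStat (fun i => X i ω) r ∧
        s < concomMin (fun i => X i ω) (fun i => W i ω * φ t) r}).toReal /
      (μ {ω | s < concomMin (fun i => X i ω) (fun i => W i ω) r}).toReal
      = (∫ x in Set.Ioi t,
          (μ {ω | X ⟨0, by omega⟩ ω < x}).toReal ^ (r - 1) *
          (μ {ω | x < X ⟨0, by omega⟩ ω ∧ s / φ t < W ⟨0, by omega⟩ ω}).toReal ^ (n - r) *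
          ∫ y in Set.Ioi (s / φ t), f x y) /
        (∫ x in Set.Ioi (0 : ℝ),
          (μ {ω | X ⟨0, by omega⟩ ω < x}).toReal ^ (r - 1) *
          (μ {ω | x < X ⟨0, by omega⟩ ω ∧ s < W ⟨0, by omega⟩ ω}).toReal ^ (n - r) *
          ∫ y in Set.Ioi s, f x y) := by
  obtain ⟨m, rfl⟩ : ∃ m, n = m + 1 := ⟨n - 1, by omega⟩
  set i₀ : Fin (m + 1) := ⟨0, by omega⟩
  set ν := (volume : Measure (ℝ × ℝ)).withDensity fun p => ENNReal.ofReal (f p.1 p.2) with hν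
  have hXW : ∀ i, Measurable fun ω => (X i ω, W i ω) := fun i => (hXmeas i).prodMk (hWmeas i)
  have : IsProbabilityMeasure ν :=
    hlaw i₀ ▸ Measure.isProbabilityMeasure_map (hXW i₀).aemeasurable
  have hnonneg : ∀ᵐ q ∂ν, 0 ≤ q.1 := by
    rw [← hlaw i₀]
    exact (ae_map_iff (hXW i₀).aemeasurable
      (measurableSet_le measurable_const measurable_fst)).mpr (hX_nonneg i₀)
  have hφt : 0 < φ t := (hφ_mem t ht).1
  have hnum : {ω | t < orderStat (fun i => X i ω) r ∧
      s < concomMin (fun i => X i ω) (fun i => W i ω * φ t) r}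
      = {ω | (fun i => (X i ω, W i ω)) ∈ concomEvent (m + 1) r (Set.Ioi t) (s / φ t)} := by
    ext ω
    simp [concomEvent, lt_concomMin_iff _ _ hr hrn, div_lt_iff₀ hφt]
  have hden : {ω | s < concomMin (fun i => X i ω) (fun i => W i ω) r}
      = {ω | (fun i => (X i ω, W i ω)) ∈ concomEvent (m + 1) r Set.univ s} := by
    ext ω
    simp [concomEvent, lt_concomMin_iff _ _ hr hrn]
  have hlaw₀ : ∀ S, MeasurableSet S → μ ((fun ω => (X i₀ ω, W i₀ ω)) ⁻¹' S) = ν S :=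
    fun S hS => by rw [← hlaw i₀, Measure.map_apply (hXW i₀) hS]
  have hF : ∀ x, μ {ω | X i₀ ω < x} = ν {q | q.1 < x} :=
    fun x => hlaw₀ _ (measurableSet_lt measurable_fst measurable_const)
  have hG : ∀ x c, μ {ω | x < X i₀ ω ∧ c < W i₀ ω} = ν {q | x < q.1 ∧ c < q.2} :=
    fun x c => hlaw₀ _ ((measurableSet_lt measurable_const measurable_fst).inter
      (measurableSet_lt measurable_const measurable_snd))
  have hK : (((m + 1) * m.choose (r - 1) : ℕ) : ℝ) ≠ 0 := by
    have := Nat.choose_pos (n := m) (k := r - 1) (by omega)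
    positivity
  rw [hnum, hden,
    hindep.measure_preimage_eq_pi hXW hlaw (measurableSet_concomEvent hr hrn measurableSet_Ioi _),
    hindep.measure_preimage_eq_pi hXW hlaw (measurableSet_concomEvent hr hrn .univ _),
    pi_concomEvent_univ hr hrn ν (withDensity_fst_eq_null _) hnonneg,
    toReal_pi_concomEvent hr hrn f hf_nonneg hf_meas hν measurableSet_Ioi,
    toReal_pi_concomEvent hr hrn f hf_nonneg hf_meas hν measurableSet_Ioi, mul_div_mul_left _ _ hK]
  simp only [hF, hG]
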